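/- arXiv:2004.08259 — 2 statements merged into one kernel-verified Lean document; each statement's English description precedes it below -/
import Mathlib

section
/- Fix x₀ ∈ C and constants σ, L > 0 such that ‖J(x)‖ ≤ σ for all x ∈ C ∩ S(x₀) and ‖J(y) − J(x)‖ ≤ L‖y − x‖ for all x, y ∈ C with L(x, y) ⊆ S(x₀), and let L_f := σ² + L‖F(x₀)‖. Then for every x ∈ C ∩ S(x₀) and every η ≥ L_f, the point P_η(x) is a (2‖G_η(x)‖)-stationary point of the problem min_{x ∈ C} f(x). -/
/-!
Since `p = P_η(x)` minimizes a strongly convex model over `C`, it satisfies the first-order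
condition `⟪∇f(x) + η (p - x), y - p⟫ ≥ 0` on `C`, hence
`⟪∇f(p), y - p⟫ ≥ -(‖∇f(p) - ∇f(x)‖ + η ‖p - x‖) ‖y - p‖`, and it suffices that
`‖∇f(p) - ∇f(x)‖ ≤ L_f ‖p - x‖ ≤ η ‖p - x‖`. Writing
`∇f(w) - ∇f(u) = J(w)ᵀ (F(w) - F(u)) + (J(w) - J(u))ᵀ F(u)` shows that `∇f` is
`L_f`-Lipschitz along segments of `C` inside the sublevel set `S(x₀)`.

The real work is to show that the segment `[x, p]` stays in `S(x₀)`, by continuous induction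
along `t ↦ x + t (p - x)`. Taking `y = x` in the definition of `p` gives
`⟪∇f(x), p - x⟫ ≤ -(η/2) ‖p - x‖² < 0`, so `f` decreases at `t = 0`; and once
`[x, x + t (p - x)]` lies in `S(x₀)`, the descent lemma gives
`f(x + t (p - x)) ≤ f(x) - (t/2) (η - t L_f) ‖p - x‖² < f(x)` for `0 < t < 1`,
so by continuity the segment can be extended.
-/

open scoped RealInnerProductSpace

/-- The gradient of f(x) = (1/2)‖F(x)‖², namely ∇f(x) = J(x)ᵀ F(x). -/
noncomputable def gradf {d n : ℕ}
    (F : EuclideanSpace ℝ (Fin d) → EuclideanSpace ℝ (Fin n))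
    (x : EuclideanSpace ℝ (Fin d)) : EuclideanSpace ℝ (Fin d) :=
  ContinuousLinearMap.adjoint (fderiv ℝ F x) (F x)

open Set Filter Topology

section InnerProductSpace

variable {E : Type*} [NormedAddCommGroup E] [InnerProductSpace ℝ E]

theorem neg_two_mul_norm_smul_sub_mul_le_inner {gx gp x p y : E} {K η : ℝ}
    (hK : ‖gp - gx‖ ≤ K * ‖p - x‖) (hKη : K ≤ η) (hη : 0 ≤ η)
    (hopt : 0 ≤ ⟪gx + η • (p - x), y - p⟫) :
    -(2 * ‖η • (x - p)‖) * ‖y - p‖ ≤ ⟪gp, y - p⟫ := by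
  have hsplit : ⟪gp, y - p⟫ =
      ⟪gp - gx, y - p⟫ + ⟪gx + η • (p - x), y - p⟫ - η * ⟪p - x, y - p⟫ := by
    simp only [inner_sub_left, inner_add_left, real_inner_smul_left]
    ring
  have h₁ := neg_le_of_abs_le (abs_real_inner_le_norm (gp - gx) (y - p))
  have h₂ := real_inner_le_norm (p - x) (y - p)
  rw [hsplit, norm_smul, Real.norm_of_nonneg hη, norm_sub_rev x p]
  have hyp := norm_nonneg (y - p)
  nlinarith [mul_le_mul_of_nonneg_right hK hyp, mul_le_mul_of_nonneg_left h₂ hη,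
    mul_le_mul_of_nonneg_right hKη (mul_nonneg (norm_nonneg (p - x)) hyp)]

variable [CompleteSpace E]

theorem HasGradientAt.hasDerivAt_add_smul {f : E → ℝ} {f' x v : E} {t : ℝ}
    (hf : HasGradientAt f f' (x + t • v)) :
    HasDerivAt (fun s : ℝ => f (x + s • v)) ⟪f', v⟫ t := by
  have hline : HasDerivAt (fun s : ℝ => x + s • v) v t := by
    simpa using ((hasDerivAt_id t).smul_const v).const_add x
  have h := hf.hasFDerivAt.comp_hasDerivAt t hline
  rw [InnerProductSpace.toDual_apply_apply] at h
  exact h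

theorem le_add_inner_add_of_norm_gradient_sub_le {f : E → ℝ} {f' : E → E} {x y : E} {K : ℝ}
    (hf : ∀ z ∈ segment ℝ x y, HasGradientAt f (f' z) z)
    (hK : ∀ z ∈ segment ℝ x y, ‖f' z - f' x‖ ≤ K * ‖z - x‖) :
    f y ≤ f x + ⟪f' x, y - x⟫ + K / 2 * ‖y - x‖ ^ 2 := by
  set v := y - x
  have hmem : ∀ s ∈ Icc (0 : ℝ) 1, x + s • v ∈ segment ℝ x y := by
    rw [segment_eq_image']
    exact fun s hs => ⟨s, hs, rfl⟩
  have hderiv : ∀ s ∈ Icc (0 : ℝ) 1,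
      HasDerivAt (fun s : ℝ => f (x + s • v)) ⟪f' (x + s • v), v⟫ s :=
    fun s hs => (hf _ (hmem s hs)).hasDerivAt_add_smul
  have hbound : ∀ s ∈ Icc (0 : ℝ) 1, ⟪f' (x + s • v), v⟫ ≤ ⟪f' x, v⟫ + K * s * ‖v‖ ^ 2 := by
    intro s hs
    have h := hK _ (hmem s hs)
    rw [add_sub_cancel_left, norm_smul, Real.norm_of_nonneg hs.1] at h
    have := real_inner_le_norm (f' (x + s • v) - f' x) v
    rw [inner_sub_left] at this
    nlinarith [mul_le_mul_of_nonneg_right h (norm_nonneg v)]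
  have key := image_le_of_deriv_right_le_deriv_boundary (a := 0) (b := 1)
    (f := fun s => f (x + s • v)) (B := fun s => f x + s * ⟪f' x, v⟫ + K / 2 * s ^ 2 * ‖v‖ ^ 2)
    (fun s hs => (hderiv s hs).continuousAt.continuousWithinAt)
    (fun s hs => (hderiv s (Ico_subset_Icc_self hs)).hasDerivWithinAt)
    (by simp) (by fun_prop)
    (fun s _ => by
      refine ((((hasDerivAt_id s).mul_const _).const_add _).add
        (((hasDerivAt_pow 2 s).const_mul (K / 2)).mul_const _)).hasDerivWithinAt.congr_deriv ?_
      ring)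
    (fun s hs => hbound s (Ico_subset_Icc_self hs))
    (right_mem_Icc.2 zero_le_one)
  simpa [v] using key

theorem IsMinOn.inner_add_smul_sub_nonneg {C : Set E} (hC : Convex ℝ C) {g x p y : E} {η : ℝ}
    (hmin : IsMinOn (fun y => ⟪g, y - x⟫ + η / 2 * ‖y - x‖ ^ 2) C p) (hp : p ∈ C) (hy : y ∈ C) :
    0 ≤ ⟪g + η • (p - x), y - p⟫ := by
  have hsub := (hasFDerivAt_id (𝕜 := ℝ) p).sub_const x
  have hderiv : HasFDerivAt (fun y => ⟪g, y - x⟫ + η / 2 * ‖y - x‖ ^ 2)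
      (InnerProductSpace.toDual ℝ E (g + η • (p - x))) p := by
    refine (((innerSL ℝ g).hasFDerivAt.comp p hsub).add
      (hsub.norm_sq.const_mul (η / 2 : ℝ))).congr_fderiv ?_
    ext v
    simp only [ContinuousLinearMap.comp_id, add_apply, coe_innerSL_apply,
      smul_apply, id_eq, nsmul_eq_mul, smul_eq_mul,
      InnerProductSpace.toDual_apply_apply, inner_add_left, real_inner_smul_left]
    ring
  simpa only [InnerProductSpace.toDual_apply_apply] using
    hmin.localize.hasFDerivWithinAt_nonneg hderiv.hasFDerivWithinAt
      (sub_mem_posTangentConeAt_of_segment_subset (hC.segment_subset hp hy))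

theorem HasDerivWithinAt.eventually_nhdsGT_lt {g : ℝ → ℝ} {d t : ℝ}
    (hg : HasDerivWithinAt g d (Ioi t) t) (hd : d < 0) : ∀ᶠ s in 𝓝[>] t, g s < g t := by
  filter_upwards [hg.limsup_slope_le' (lt_irrefl t) hd, self_mem_nhdsWithin]
    with s hslope (hs : t < s)
  rwa [slope_def_field, div_lt_iff₀ (sub_pos.2 hs), zero_mul, sub_neg] at hslope

theorem apply_add_smul_sub_lt_of_inner_add_le_zero {f : E → ℝ} {f' : E → E} {x p : E}
    {c K η t : ℝ} (hf : ∀ z ∈ segment ℝ x p, HasGradientAt f (f' z) z) (hpx : p ≠ x)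
    (hη : 0 < η) (hKη : K ≤ η) (hstep : ⟪f' x, p - x⟫ + η / 2 * ‖p - x‖ ^ 2 ≤ 0)
    (hK : ∀ w ∈ segment ℝ x p, segment ℝ x w ⊆ {z | f z ≤ c} → ‖f' w - f' x‖ ≤ K * ‖w - x‖)
    (ht : t ∈ Ioo 0 1) (hc : segment ℝ x (x + t • (p - x)) ⊆ {z | f z ≤ c}) :
    f (x + t • (p - x)) < f x := by
  set w := x + t • (p - x)
  have hw : w ∈ segment ℝ x p := by
    rw [segment_eq_image']
    exact ⟨t, Ioo_subset_Icc_self ht, rfl⟩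
  have hxw : segment ℝ x w ⊆ segment ℝ x p :=
    (convex_segment x p).segment_subset (left_mem_segment ℝ x p) hw
  have hdesc := le_add_inner_add_of_norm_gradient_sub_le (x := x) (y := w) (K := K)
    (fun z hz => hf z (hxw hz)) fun z hz => hK z (hxw hz) <|
      ((convex_segment x w).segment_subset (left_mem_segment ℝ x w) hz).trans hc
  rw [show w - x = t • (p - x) from add_sub_cancel_left _ _, inner_smul_right, norm_smul,
    Real.norm_of_nonneg ht.1.le] at hdesc
  have hv : 0 < ‖p - x‖ := norm_pos_iff.2 (sub_ne_zero.2 hpx)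
  have hKt : K * t < η := by
    rcases le_or_gt K 0 with hK0 | hK0 <;> nlinarith [ht.1, ht.2]
  nlinarith [mul_pos (mul_pos ht.1 (pow_pos hv 2)) (sub_pos.2 hKt),
    mul_le_mul_of_nonneg_left hstep ht.1.le]

theorem segment_subset_sublevel_of_inner_add_le_zero {f : E → ℝ} {f' : E → E} {x p : E}
    {c K η : ℝ} (hf : ∀ z ∈ segment ℝ x p, HasGradientAt f (f' z) z) (hxc : f x ≤ c)
    (hη : 0 < η) (hKη : K ≤ η) (hstep : ⟪f' x, p - x⟫ + η / 2 * ‖p - x‖ ^ 2 ≤ 0)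
    (hK : ∀ w ∈ segment ℝ x p, segment ℝ x w ⊆ {z | f z ≤ c} → ‖f' w - f' x‖ ≤ K * ‖w - x‖) :
    segment ℝ x p ⊆ {z | f z ≤ c} := by
  rcases eq_or_ne p x with rfl | hpx
  · simpa using hxc
  set v := p - x
  set g : ℝ → ℝ := fun s => f (x + s • v)
  have hmem : ∀ s ∈ Icc (0 : ℝ) 1, x + s • v ∈ segment ℝ x p := by
    rw [segment_eq_image']
    exact fun s hs => ⟨s, hs, rfl⟩
  have hderiv : ∀ s ∈ Icc (0 : ℝ) 1, HasDerivAt g ⟪f' (x + s • v), v⟫ s :=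
    fun s hs => (hf _ (hmem s hs)).hasDerivAt_add_smul
  suffices Icc (0 : ℝ) 1 ⊆ {s | g s ≤ c} by
    rw [segment_eq_image']
    rintro _ ⟨s, hs, rfl⟩
    exact this hs
  have hclosed : IsClosed ({s | g s ≤ c} ∩ Icc 0 1) := by
    rw [inter_comm]
    exact ContinuousOn.preimage_isClosed_of_isClosed
      (fun s hs => (hderiv s hs).continuousAt.continuousWithinAt) isClosed_Icc isClosed_Iic
  have hg₀ : g 0 = f x := by simp [g]
  refine hclosed.Icc_subset_of_forall_mem_nhdsGT_of_Icc_subset (show g 0 ≤ c from hg₀ ▸ hxc) ?_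
  intro t ht hIcc
  rcases ht.1.eq_or_lt with rfl | ht₀
  · have hv : 0 < ‖v‖ := norm_pos_iff.2 (sub_ne_zero.2 hpx)
    have hneg : ⟪f' x, v⟫ < 0 := by nlinarith [mul_pos hη (pow_pos hv 2)]
    have hderiv₀ : HasDerivWithinAt g ⟪f' x, v⟫ (Ioi 0) 0 := by
      simpa using (hderiv 0 (left_mem_Icc.2 zero_le_one)).hasDerivWithinAt (s := Ioi 0)
    filter_upwards [hderiv₀.eventually_nhdsGT_lt hneg] with s hs
    exact (hs.trans_le (hg₀ ▸ hxc)).le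
  · have hseg : segment ℝ x (x + t • v) ⊆ {z | f z ≤ c} := by
      rw [segment_eq_image']
      rintro _ ⟨θ, hθ, rfl⟩
      have := hIcc ⟨mul_nonneg hθ.1 ht.1, mul_le_of_le_one_left ht.1 hθ.2⟩
      simpa [g, smul_smul] using this
    have hgt : g t < c := (apply_add_smul_sub_lt_of_inner_add_le_zero hf hpx hη hKη hstep hK
      ⟨ht₀, ht.2⟩ hseg).trans_le hxc
    exact eventually_nhdsWithin_of_eventually_nhds <|
      (hderiv t ⟨ht.1, ht.2.le⟩).continuousAt.eventually_lt continuousAt_const hgt |>.mono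
        fun _ h => h.le

end InnerProductSpace

section Adjoint

variable {E G : Type*} [NormedAddCommGroup E] [InnerProductSpace ℝ E] [CompleteSpace E]
  [NormedAddCommGroup G] [InnerProductSpace ℝ G] [CompleteSpace G]

theorem HasFDerivAt.hasGradientAt_half_norm_sq {F : E → G} {J : E →L[ℝ] G} {x : E}
    (hF : HasFDerivAt F J x) :
    HasGradientAt (fun y => 1 / 2 * ‖F y‖ ^ 2) (ContinuousLinearMap.adjoint J (F x)) x := by
  refine (hF.norm_sq.const_mul (1 / 2 : ℝ)).congr_fderiv ?_
  ext v
  simp [ContinuousLinearMap.adjoint_inner_left]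

theorem norm_adjoint_apply_sub_adjoint_apply_le {A B : E →L[ℝ] G} {a b : G} {σ L M δ : ℝ}
    (hB : ‖B‖ ≤ σ) (hba : ‖b - a‖ ≤ σ * δ) (hBA : ‖B - A‖ ≤ L * δ) (ha : ‖a‖ ≤ M) :
    ‖ContinuousLinearMap.adjoint B b - ContinuousLinearMap.adjoint A a‖ ≤ (σ ^ 2 + L * M) * δ := by
  have hsplit : ContinuousLinearMap.adjoint B b - ContinuousLinearMap.adjoint A a =
      ContinuousLinearMap.adjoint B (b - a) + ContinuousLinearMap.adjoint (B - A) a := by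
    simp only [map_sub, sub_apply]
    abel
  have h₁ : ‖ContinuousLinearMap.adjoint B (b - a)‖ ≤ σ * (σ * δ) := by
    refine ((ContinuousLinearMap.adjoint B).le_opNorm _).trans ?_
    rw [LinearIsometryEquiv.norm_map]
    exact mul_le_mul hB hba (norm_nonneg _) ((norm_nonneg _).trans hB)
  have h₂ : ‖ContinuousLinearMap.adjoint (B - A) a‖ ≤ L * δ * M := by
    refine ((ContinuousLinearMap.adjoint (B - A)).le_opNorm _).trans ?_
    rw [LinearIsometryEquiv.norm_map]
    exact mul_le_mul hBA ha (norm_nonneg _) ((norm_nonneg _).trans hBA)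
  calc _ ≤ σ * (σ * δ) + L * δ * M := hsplit ▸ (norm_add_le _ _).trans (add_le_add h₁ h₂)
    _ = (σ ^ 2 + L * M) * δ := by ring

end Adjoint

theorem norm_gradf_sub_le {d n : ℕ} {F : EuclideanSpace ℝ (Fin d) → EuclideanSpace ℝ (Fin n)}
    (hF : Differentiable ℝ F) {C S : Set (EuclideanSpace ℝ (Fin d))} (hC : Convex ℝ C)
    {σ L M : ℝ} (hJ : ∀ x ∈ C ∩ S, ‖fderiv ℝ F x‖ ≤ σ)
    (hJLip : ∀ x ∈ C, ∀ y ∈ C, segment ℝ x y ⊆ S → ‖fderiv ℝ F y - fderiv ℝ F x‖ ≤ L * ‖y - x‖)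
    (hFS : ∀ x ∈ S, ‖F x‖ ≤ M) {u w : EuclideanSpace ℝ (Fin d)} (hu : u ∈ C) (hw : w ∈ C)
    (hS : segment ℝ u w ⊆ S) :
    ‖gradf F w - gradf F u‖ ≤ (σ ^ 2 + L * M) * ‖w - u‖ := by
  have hsegC : segment ℝ u w ⊆ C := hC.segment_subset hu hw
  have hFLip : ‖F w - F u‖ ≤ σ * ‖w - u‖ :=
    (convex_segment u w).norm_image_sub_le_of_norm_fderiv_le (fun z _ => hF z)
      (fun z hz => hJ z ⟨hsegC hz, hS hz⟩) (left_mem_segment ℝ u w) (right_mem_segment ℝ u w)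
  exact norm_adjoint_apply_sub_adjoint_apply_le (hJ w ⟨hw, hS (right_mem_segment ℝ u w)⟩) hFLip
    (hJLip u hu w hw hS) (hFS u (hS (left_mem_segment ℝ u w)))

theorem stmt_8_general {d n : ℕ}
    (F : EuclideanSpace ℝ (Fin d) → EuclideanSpace ℝ (Fin n))
    (hF : ContDiff ℝ 1 F)
    (f : EuclideanSpace ℝ (Fin d) → ℝ)
    (hf : ∀ x, f x = (1 / 2) * ‖F x‖ ^ 2)
    (C : Set (EuclideanSpace ℝ (Fin d)))
    (hCconvex : Convex ℝ C)
    (x₀ : EuclideanSpace ℝ (Fin d))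
    (σ L : ℝ) (hσ : 0 < σ) (hL : 0 < L)
    (hJ : ∀ x ∈ C ∩ {z | f z ≤ f x₀}, ‖fderiv ℝ F x‖ ≤ σ)
    (hJLip : ∀ x ∈ C, ∀ y ∈ C, segment ℝ x y ⊆ {z | f z ≤ f x₀} →
      ‖fderiv ℝ F y - fderiv ℝ F x‖ ≤ L * ‖y - x‖)
    (Lf : ℝ) (hLfdef : Lf = σ ^ 2 + L * ‖F x₀‖)
    (η : ℝ) (hη : Lf ≤ η)
    (x : EuclideanSpace ℝ (Fin d)) (hx : x ∈ C ∩ {z | f z ≤ f x₀})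
    (p : EuclideanSpace ℝ (Fin d)) (hp : p ∈ C)
    (hpmin : ∀ y ∈ C,
      ⟪gradf F x, p - x⟫ + (η / 2) * ‖p - x‖ ^ 2 ≤
      ⟪gradf F x, y - x⟫ + (η / 2) * ‖y - x‖ ^ 2) :
    ∀ y ∈ C, ⟪gradf F p, y - p⟫ ≥ -(2 * ‖η • (x - p)‖) * ‖y - p‖ := by
  obtain ⟨hxC, hxS⟩ := hx
  have hFd : Differentiable ℝ F := hF.differentiable one_ne_zero
  have hgrad : ∀ z, HasGradientAt f (gradf F z) z := fun z => by
    rw [show f = fun y => 1 / 2 * ‖F y‖ ^ 2 from funext hf]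
    exact (hFd z).hasFDerivAt.hasGradientAt_half_norm_sq
  have hFS : ∀ z ∈ {z | f z ≤ f x₀}, ‖F z‖ ≤ ‖F x₀‖ := fun z (hz : f z ≤ f x₀) => by
    rw [hf, hf] at hz
    nlinarith [norm_nonneg (F z), norm_nonneg (F x₀)]
  have hLip : ∀ u ∈ C, ∀ w ∈ C, segment ℝ u w ⊆ {z | f z ≤ f x₀} →
      ‖gradf F w - gradf F u‖ ≤ Lf * ‖w - u‖ := fun u hu w hw hS =>
    hLfdef ▸ norm_gradf_sub_le hFd hCconvex hJ hJLip hFS hu hw hS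
  have hη₀ : 0 < η := lt_of_lt_of_le (by rw [hLfdef]; positivity) hη
  have hS : segment ℝ x p ⊆ {z | f z ≤ f x₀} :=
    segment_subset_sublevel_of_inner_add_le_zero (fun z _ => hgrad z) hxS hη₀ hη
      (by simpa using hpmin x hxC)
      fun w hw hxw => hLip x hxC w (hCconvex.segment_subset hxC hp hw) hxw
  intro y hy
  exact neg_two_mul_norm_smul_sub_mul_le_inner (hLip x hxC p hp hS) hη hη₀.le
    (IsMinOn.inner_add_smul_sub_nonneg hCconvex hpmin hp hy)

/-- A small gradient mapping yields an approximate stationary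
point: `p = P_η(x)` is a (2‖G_η(x)‖)-stationary point of min_{x ∈ C} f(x),
where G_η(x) = η(x − P_η(x)). -/
theorem stmt_8 {d n : ℕ}
    (F : EuclideanSpace ℝ (Fin d) → EuclideanSpace ℝ (Fin n))
    (hF : ContDiff ℝ 1 F)
    (f : EuclideanSpace ℝ (Fin d) → ℝ)
    (hf : ∀ x, f x = (1 / 2) * ‖F x‖ ^ 2)
    (C : Set (EuclideanSpace ℝ (Fin d)))
    (hCne : C.Nonempty) (hCclosed : IsClosed C) (hCconvex : Convex ℝ C)
    (x₀ : EuclideanSpace ℝ (Fin d)) (hx₀ : x₀ ∈ C)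
    (σ L : ℝ) (hσ : 0 < σ) (hL : 0 < L)
    (hJ : ∀ x ∈ C ∩ {z | f z ≤ f x₀}, ‖fderiv ℝ F x‖ ≤ σ)
    (hJLip : ∀ x ∈ C, ∀ y ∈ C, segment ℝ x y ⊆ {z | f z ≤ f x₀} →
      ‖fderiv ℝ F y - fderiv ℝ F x‖ ≤ L * ‖y - x‖)
    (Lf : ℝ) (hLfdef : Lf = σ ^ 2 + L * ‖F x₀‖)
    (η : ℝ) (hη : Lf ≤ η)
    (x : EuclideanSpace ℝ (Fin d)) (hx : x ∈ C ∩ {z | f z ≤ f x₀})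
    (p : EuclideanSpace ℝ (Fin d)) (hp : p ∈ C)
    (hpmin : ∀ y ∈ C,
      ⟪gradf F x, p - x⟫ + (η / 2) * ‖p - x‖ ^ 2 ≤
      ⟪gradf F x, y - x⟫ + (η / 2) * ‖y - x‖ ^ 2) :
    ∀ y ∈ C, ⟪gradf F p, y - p⟫ ≥ -(2 * ‖η • (x - p)‖) * ‖y - p‖ :=
  stmt_8_general F hF f hf C hCconvex x₀ σ L hσ hL hJ hJLip Lf hLfdef η hη x hx p hp hpmin
end

section
/- Let x₀ ∈ C and let σ, L, γ > 0 be constants such that ‖J(x)‖ ≤ σ for all x ∈ C ∩ S(x₀), ‖J(y) − J(x)‖ ≤ L‖y − x‖ for all x, y ∈ C with L(x, y) ⊆ S(x₀), and set L_f := σ² + L‖F(x₀)‖. Let {x_k} ⊆ C and {λ_k} ⊆ (0, ∞) be sequences starting at x₀ such that for every k ≥ 0, f(x_{k+1}) ≤ m^k_{λ_k}(x_{k+1}) (where m^k denotes the model at x_k) and m^k_{λ_k}(x_{k+1}) − m^k_{λ_k}(x_k) ≤ −D_γ(x_k). Then for every ε > 0, every η ≥ max{γ, L_f}, and every positive integer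 K ≥ 8η f(x₀)/ε², there exists k < K such that P_η(x_k) is an ε-stationary point of min_{x ∈ C} f(x). -/
/-!
Every accepted step decreases `f` by at least `D_γ(x_k) ≥ 0`, so some `k < K` has
`D_γ(x_k) ≤ f(x₀)/K ≤ ε²/(8η)`. Comparing the projected-gradient problems for `γ ≤ η` gives
`(η/2)‖P_η(x_k) - x_k‖² ≤ D_γ(x_k)`, i.e. `‖P_η(x_k) - x_k‖ ≤ ε/(2η)`. The optimality condition of
`P_η(x_k)` makes `P_η(x_k) - x_k` a descent direction of slope `≤ -η‖P_η(x_k) - x_k‖²`; while the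
segment from `x_k` stays in `C ∩ S(x₀)` the gradient is `L_f`-Lipschitz on it with `L_f ≤ η`, and a
continuous induction shows that the segment never leaves `S(x₀)`. The optimality condition and
`‖∇f(P_η(x_k)) - ∇f(x_k)‖ ≤ L_f ‖P_η(x_k) - x_k‖` then give
`⟨∇f(P_η(x_k)), y - P_η(x_k)⟩ ≥ -(L_f + η) ‖P_η(x_k) - x_k‖ ‖y - P_η(x_k)‖ ≥ -ε ‖y - P_η(x_k)‖`.
-/

open scoped RealInnerProductSpace
open Set Filter

section InnerProductSpace

variable {E : Type*} [NormedAddCommGroup E] [InnerProductSpace ℝ E]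

/-- `P_η(x)` minimises `proxObjective (∇f(x)) x η` over `C`, and `D_η(x)` is minus the minimum. -/
noncomputable def proxObjective (g x : E) (η : ℝ) (y : E) : ℝ :=
  ⟪g, y - x⟫ + η / 2 * ‖y - x‖ ^ 2

variable {C : Set E} {g x p : E} {η : ℝ}

theorem IsMinOn.inner_add_mul_inner_nonneg (hC : Convex ℝ C)
    (hmin : IsMinOn (proxObjective g x η) C p) (hp : p ∈ C) {y : E} (hy : y ∈ C) :
    0 ≤ ⟪g, y - p⟫ + η * ⟪p - x, y - p⟫ := by
  have hderiv : HasFDerivAt (proxObjective g x η)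
      (innerSL ℝ g + (η / 2) • (2 • (innerSL ℝ (p - x)).comp (ContinuousLinearMap.id ℝ E))) p :=
    (((innerSL ℝ g).hasFDerivAt.sub_const ⟪g, x⟫).congr_of_eventuallyEq
      (Eventually.of_forall fun y => by simp [inner_sub_right])).add
      (((hasFDerivAt_id p).sub_const x).norm_sq.const_mul (η / 2))
  convert hmin.localize.hasFDerivWithinAt_nonneg hderiv.hasFDerivWithinAt
    (sub_mem_posTangentConeAt_of_segment_subset (hC.segment_subset hp hy)) using 1
  simp only [add_apply, smul_apply, ContinuousLinearMap.comp_apply, innerSL_apply_apply,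
    ContinuousLinearMap.id_apply, smul_eq_mul, nsmul_eq_mul]
  ring

theorem IsMinOn.inner_sub_le_neg_mul_norm_sq (hC : Convex ℝ C)
    (hmin : IsMinOn (proxObjective g x η) C p) (hp : p ∈ C) (hx : x ∈ C) :
    ⟪g, p - x⟫ ≤ -(η * ‖p - x‖ ^ 2) := by
  have h := hmin.inner_add_mul_inner_nonneg hC hp hx
  rw [← neg_sub p x, inner_neg_right, inner_neg_right, real_inner_self_eq_norm_sq] at h
  linarith

theorem IsMinOn.proxObjective_nonpos {q : E} (hmin : IsMinOn (proxObjective g x η) C q)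
    (hx : x ∈ C) : proxObjective g x η q ≤ 0 :=
  (isMinOn_iff.1 hmin x hx).trans_eq (by simp [proxObjective])

theorem half_mul_norm_sq_le_neg_proxObjective {q : E} {γ : ℝ} (hγη : γ ≤ η)
    (hmin : IsMinOn (proxObjective g x γ) C q) (hp : p ∈ C)
    (hdesc : ⟪g, p - x⟫ ≤ -(η * ‖p - x‖ ^ 2)) :
    η / 2 * ‖p - x‖ ^ 2 ≤ -proxObjective g x γ q := by
  have h := isMinOn_iff.mp hmin p hp
  have : γ / 2 * ‖p - x‖ ^ 2 ≤ η / 2 * ‖p - x‖ ^ 2 := by gcongr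
  unfold proxObjective at h ⊢
  linarith

theorem inner_ge_neg_mul_norm_of_variational {g' : E} {Λ ε : ℝ} (hη : 0 ≤ η)
    (hvi : ∀ y ∈ C, 0 ≤ ⟪g, y - p⟫ + η * ⟪p - x, y - p⟫) (hg' : ‖g' - g‖ ≤ Λ * ‖p - x‖)
    (hε : (Λ + η) * ‖p - x‖ ≤ ε) : ∀ y ∈ C, ⟪g', y - p⟫ ≥ -ε * ‖y - p‖ := by
  intro y hy
  have h1 : -(‖g' - g‖ * ‖y - p‖) ≤ ⟪g' - g, y - p⟫ :=
    neg_le_of_abs_le (abs_real_inner_le_norm _ _)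
  have h2 : η * ⟪p - x, y - p⟫ ≤ η * (‖p - x‖ * ‖y - p‖) :=
    mul_le_mul_of_nonneg_left (real_inner_le_norm _ _) hη
  have h3 : ‖g' - g‖ * ‖y - p‖ ≤ Λ * ‖p - x‖ * ‖y - p‖ := by gcongr
  have h4 : (Λ + η) * ‖p - x‖ * ‖y - p‖ ≤ ε * ‖y - p‖ := by gcongr
  rw [inner_sub_left] at h1
  linarith [hvi y hy]

end InnerProductSpace

section HilbertSpace

variable {E : Type*} [NormedAddCommGroup E] [InnerProductSpace ℝ E] [CompleteSpace E]

/- Continuous induction on `t ∈ [0, 1]`: while `f ≤ f a` on `[a, a + t • (p - a)]`, the Lipschitz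
bound makes the slope of `f` along the segment at `t < 1` at most `-η (1 - t) ‖p - a‖² < 0`. -/
theorem segment_subset_sublevel_of_inner_gradient_le {f : E → ℝ} {g : E → E} {a p : E} {η : ℝ}
    (hf : ∀ z, HasGradientAt f (g z) z) (hη : 0 < η)
    (hdesc : ⟪g a, p - a⟫ ≤ -(η * ‖p - a‖ ^ 2))
    (hlip : ∀ b ∈ segment ℝ a p, segment ℝ a b ⊆ {w | f w ≤ f a} →
      ‖g b - g a‖ ≤ η * ‖b - a‖) :
    segment ℝ a p ⊆ {w | f w ≤ f a} := by
  rcases eq_or_ne p a with rfl | hpa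
  · simp [segment_same]
  set v := p - a
  have hv : 0 < ‖v‖ := norm_pos_iff.mpr (sub_ne_zero.mpr hpa)
  set φ : ℝ → ℝ := fun t => f (a + t • v)
  have hφ : ∀ t, HasDerivAt φ ⟪g (a + t • v), v⟫ t := fun t => by
    have hline : HasDerivAt (fun s : ℝ => a + s • v) v t := by
      simpa using ((hasDerivAt_id t).smul_const v).const_add a
    have h := (hf _).hasFDerivAt.comp_hasDerivAt t hline
    rwa [InnerProductSpace.toDual_apply_apply] at h
  have key : Icc (0 : ℝ) 1 ⊆ {t | φ t ≤ f a} := by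
    refine IsClosed.Icc_subset_of_forall_mem_nhdsGT_of_Icc_subset ?_ (by simp [φ])
      fun t ht hsub => ?_
    · exact (isClosed_le (continuous_iff_continuousAt.2 fun t => (hφ t).continuousAt)
        continuous_const).inter isClosed_Icc
    have hsegt : segment ℝ a (a + t • v) ⊆ {w | f w ≤ f a} := by
      rw [segment_eq_image']
      rintro _ ⟨s, hs, rfl⟩
      simpa [φ, smul_smul] using hsub ⟨mul_nonneg hs.1 ht.1, mul_le_of_le_one_left ht.1 hs.2⟩
    have hmem : a + t • v ∈ segment ℝ a p := by
      rw [segment_eq_image']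
      exact ⟨t, Ico_subset_Icc_self ht, rfl⟩
    have hlipt := hlip _ hmem hsegt
    rw [add_sub_cancel_left, norm_smul, Real.norm_of_nonneg ht.1] at hlipt
    have hneg : ⟪g (a + t • v), v⟫ < 0 := by
      have h1 : ⟪g (a + t • v) - g a, v⟫ ≤ η * (t * ‖v‖) * ‖v‖ :=
        (real_inner_le_norm _ _).trans (by gcongr)
      rw [inner_sub_left] at h1
      nlinarith [ht.2, mul_pos hη (pow_pos hv 2)]
    filter_upwards [(hφ t).hasDerivWithinAt.limsup_slope_le' (lt_irrefl t) hneg,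
      self_mem_nhdsWithin] with u hslope htu
    rw [slope_def_field, div_lt_iff₀ (sub_pos.2 htu)] at hslope
    have hφt : φ t ≤ f a := hsub ⟨ht.1, le_rfl⟩
    exact (by linarith : φ u ≤ f a)
  rw [segment_eq_image']
  rintro _ ⟨t, ht, rfl⟩
  exact key ht

theorem inner_gradient_ge_of_neg_proxObjective_le {f : E → ℝ} {g : E → E} {C : Set E} {c : ℝ}
    {x q p : E} {γ η Λ ε : ℝ} (hf : ∀ z, HasGradientAt f (g z) z) (hC : Convex ℝ C)
    (hlip : ∀ a b, segment ℝ a b ⊆ C ∩ {w | f w ≤ c} → ‖g b - g a‖ ≤ Λ * ‖b - a‖)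
    (hx : x ∈ C) (hfx : f x ≤ c) (hη : 0 < η) (hγη : γ ≤ η) (hΛη : Λ ≤ η) (hε : 0 < ε)
    (hminγ : IsMinOn (proxObjective (g x) x γ) C q)
    (hminη : IsMinOn (proxObjective (g x) x η) C p) (hp : p ∈ C)
    (hD : -proxObjective (g x) x γ q ≤ ε ^ 2 / (8 * η)) :
    ∀ y ∈ C, ⟪g p, y - p⟫ ≥ -ε * ‖y - p‖ := by
  have hdesc := hminη.inner_sub_le_neg_mul_norm_sq hC hp hx
  have hclose : 2 * η * ‖p - x‖ ≤ ε := by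
    have h := (half_mul_norm_sq_le_neg_proxObjective hγη hminγ hp hdesc).trans hD
    rw [le_div_iff₀ (by positivity)] at h
    exact (sq_le_sq₀ (by positivity) hε.le).1 (by nlinarith)
  have hadm {b : E} (hbC : segment ℝ x b ⊆ C) (hbf : segment ℝ x b ⊆ {w | f w ≤ f x}) :
      segment ℝ x b ⊆ C ∩ {w | f w ≤ c} :=
    subset_inter hbC (hbf.trans fun w hw => le_trans hw hfx)
  have hsegC := hC.segment_subset hx hp
  have hseg : segment ℝ x p ⊆ {w | f w ≤ f x} :=
    segment_subset_sublevel_of_inner_gradient_le hf hη hdesc fun b hb hbf =>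
      (hlip _ _ (hadm (((convex_segment _ _).segment_subset (left_mem_segment ℝ _ _) hb).trans
        hsegC) hbf)).trans (by gcongr)
  exact inner_ge_neg_mul_norm_of_variational hη.le
    (fun y hy => hminη.inner_add_mul_inner_nonneg hC hp hy) (hlip _ _ (hadm hsegC hseg))
    (by nlinarith [norm_nonneg (p - x)])

end HilbertSpace

theorem exists_lt_le_of_add_le {a D : ℕ → ℝ} {K : ℕ} {δ : ℝ} (hK : 0 < K)
    (hstep : ∀ k, a (k + 1) + D k ≤ a k) (ha : 0 ≤ a K) (hbudget : a 0 ≤ K * δ) :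
    ∃ k < K, D k ≤ δ := by
  have hsum : ∑ k ∈ Finset.range K, D k ≤ ∑ k ∈ Finset.range K, δ :=
    calc ∑ k ∈ Finset.range K, D k ≤ ∑ k ∈ Finset.range K, (a k - a (k + 1)) :=
          Finset.sum_le_sum fun k _ => by linarith [hstep k]
      _ = a 0 - a K := Finset.sum_range_sub' a K
      _ ≤ ∑ k ∈ Finset.range K, δ := by
          rw [Finset.sum_const, Finset.card_range, nsmul_eq_mul]
          linarith
  obtain ⟨k, hk, h⟩ := Finset.exists_le_of_sum_le (Finset.nonempty_range_iff.2 hK.ne') hsum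
  exact ⟨k, Finset.mem_range.1 hk, h⟩

section EuclideanSpace

variable {d n : ℕ} {F : EuclideanSpace ℝ (Fin d) → EuclideanSpace ℝ (Fin n)}

theorem hasGradientAt_half_norm_sq {x : EuclideanSpace ℝ (Fin d)}
    (hF : DifferentiableAt ℝ F x) :
    HasGradientAt (fun z => 1 / 2 * ‖F z‖ ^ 2) (gradf F x) x := by
  rw [hasGradientAt_iff_hasFDerivAt]
  refine (hF.hasFDerivAt.norm_sq.const_mul (1 / 2 : ℝ)).congr_fderiv ?_
  ext v
  simp [gradf, ContinuousLinearMap.adjoint_inner_left]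

theorem norm_gradf_sub_le_s11 {a b : EuclideanSpace ℝ (Fin d)} {σ L M : ℝ}
    (hJb : ‖fderiv ℝ F b‖ ≤ σ) (hFab : ‖F b - F a‖ ≤ σ * ‖b - a‖)
    (hJab : ‖fderiv ℝ F b - fderiv ℝ F a‖ ≤ L * ‖b - a‖) (hFa : ‖F a‖ ≤ M) :
    ‖gradf F b - gradf F a‖ ≤ (σ ^ 2 + L * M) * ‖b - a‖ := by
  set Ja := fderiv ℝ F a
  set Jb := fderiv ℝ F b
  have hsplit : gradf F b - gradf F a =
      ContinuousLinearMap.adjoint Jb (F b - F a) + ContinuousLinearMap.adjoint (Jb - Ja) (F a) := by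
    simp only [gradf, map_sub, sub_apply]
    abel
  have h1 : ‖ContinuousLinearMap.adjoint Jb (F b - F a)‖ ≤ σ * (σ * ‖b - a‖) :=
    calc _ ≤ ‖Jb‖ * ‖F b - F a‖ := by
          rw [← ContinuousLinearMap.adjoint.norm_map Jb]
          exact ContinuousLinearMap.le_opNorm _ _
      _ ≤ σ * (σ * ‖b - a‖) := mul_le_mul hJb hFab (norm_nonneg _) ((norm_nonneg _).trans hJb)
  have h2 : ‖ContinuousLinearMap.adjoint (Jb - Ja) (F a)‖ ≤ L * ‖b - a‖ * M :=
    calc _ ≤ ‖Jb - Ja‖ * ‖F a‖ := by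
          rw [← ContinuousLinearMap.adjoint.norm_map (Jb - Ja)]
          exact ContinuousLinearMap.le_opNorm _ _
      _ ≤ L * ‖b - a‖ * M := mul_le_mul hJab hFa (norm_nonneg _) ((norm_nonneg _).trans hJab)
  calc ‖gradf F b - gradf F a‖ ≤ σ * (σ * ‖b - a‖) + L * ‖b - a‖ * M :=
        hsplit ▸ (norm_add_le _ _).trans (add_le_add h1 h2)
    _ = (σ ^ 2 + L * M) * ‖b - a‖ := by ring

theorem norm_gradf_sub_le_of_segment_subset {f : EuclideanSpace ℝ (Fin d) → ℝ}
    (hf : ∀ z, f z = 1 / 2 * ‖F z‖ ^ 2) (hF : Differentiable ℝ F)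
    {C : Set (EuclideanSpace ℝ (Fin d))} {c a b : EuclideanSpace ℝ (Fin d)} {σ L : ℝ}
    (hJ : ∀ z ∈ C ∩ {w | f w ≤ f c}, ‖fderiv ℝ F z‖ ≤ σ)
    (hJLip : ∀ z ∈ C, ∀ w ∈ C, segment ℝ z w ⊆ {v | f v ≤ f c} →
      ‖fderiv ℝ F w - fderiv ℝ F z‖ ≤ L * ‖w - z‖)
    (hab : segment ℝ a b ⊆ C ∩ {w | f w ≤ f c}) :
    ‖gradf F b - gradf F a‖ ≤ (σ ^ 2 + L * ‖F c‖) * ‖b - a‖ := by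
  have ha := hab (left_mem_segment ℝ a b)
  have hb := hab (right_mem_segment ℝ a b)
  have hFa : ‖F a‖ ≤ ‖F c‖ := by
    have hfa : f a ≤ f c := ha.2
    rw [hf, hf] at hfa
    exact (sq_le_sq₀ (norm_nonneg _) (norm_nonneg _)).1 (by linarith)
  refine norm_gradf_sub_le_s11 (hJ b hb) ?_ (hJLip a ha.1 b hb.1 (hab.trans inter_subset_right)) hFa
  exact (convex_segment a b).norm_image_sub_le_of_norm_hasFDerivWithin_le
    (fun z _ => (hF z).hasFDerivAt.hasFDerivWithinAt) (fun z hz => hJ z (hab hz))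
    (left_mem_segment ℝ a b) (right_mem_segment ℝ a b)

end EuclideanSpace
theorem stmt_11_general {d n : ℕ}
    (F : EuclideanSpace ℝ (Fin d) → EuclideanSpace ℝ (Fin n))
    (hF : ContDiff ℝ 1 F)
    (f : EuclideanSpace ℝ (Fin d) → ℝ)
    (hf : ∀ z, f z = (1 / 2) * ‖F z‖ ^ 2)
    (C : Set (EuclideanSpace ℝ (Fin d)))
    (hCconvex : Convex ℝ C)
    (x : ℕ → EuclideanSpace ℝ (Fin d)) (hxC : ∀ k, x k ∈ C)
    (σ L γ : ℝ) (hγ : 0 < γ)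
    (hJ : ∀ z ∈ C ∩ {w | f w ≤ f (x 0)}, ‖fderiv ℝ F z‖ ≤ σ)
    (hJLip : ∀ z ∈ C, ∀ w ∈ C, segment ℝ z w ⊆ {v | f v ≤ f (x 0)} →
      ‖fderiv ℝ F w - fderiv ℝ F z‖ ≤ L * ‖w - z‖)
    (Lf : ℝ) (hLfdef : Lf = σ ^ 2 + L * ‖F (x 0)‖)
    (lam : ℕ → ℝ)
    (m : ℕ → EuclideanSpace ℝ (Fin d) → ℝ)
    (hm : ∀ k y, m k y =
      (1 / 2) * ‖F (x k) + fderiv ℝ F (x k) (y - x k)‖ ^ 2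
      + (lam k / 2) * ‖y - x k‖ ^ 2)
    (pγ : ℕ → EuclideanSpace ℝ (Fin d))
    (hpγmin : ∀ k, ∀ y ∈ C,
      ⟪gradf F (x k), pγ k - x k⟫ + (γ / 2) * ‖pγ k - x k‖ ^ 2 ≤
      ⟪gradf F (x k), y - x k⟫ + (γ / 2) * ‖y - x k‖ ^ 2)
    (hmaj : ∀ k, f (x (k + 1)) ≤ m k (x (k + 1)))
    (hdec : ∀ k, m k (x (k + 1)) - m k (x k) ≤
      -(-(⟪gradf F (x k), pγ k - x k⟫ + (γ / 2) * ‖pγ k - x k‖ ^ 2)))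
    (η : ℝ) (hη : max γ Lf ≤ η)
    (pη : ℕ → EuclideanSpace ℝ (Fin d)) (hpηC : ∀ k, pη k ∈ C)
    (hpηmin : ∀ k, ∀ y ∈ C,
      ⟪gradf F (x k), pη k - x k⟫ + (η / 2) * ‖pη k - x k‖ ^ 2 ≤
      ⟪gradf F (x k), y - x k⟫ + (η / 2) * ‖y - x k‖ ^ 2)
    (ε : ℝ) (hε : 0 < ε)
    (K : ℕ) (hK0 : 0 < K) (hK : 8 * η * f (x 0) / ε ^ 2 ≤ K) :
    ∃ k < K, ∀ y ∈ C, ⟪gradf F (pη k), y - pη k⟫ ≥ -ε * ‖y - pη k‖ := by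
  have hγη : γ ≤ η := le_of_max_le_left hη
  have hη0 : 0 < η := hγ.trans_le hγη
  have hF' : Differentiable ℝ F := hF.differentiable one_ne_zero
  obtain ⟨D, hD⟩ : ∃ D : ℕ → ℝ,
      ∀ k, D k = -(⟪gradf F (x k), pγ k - x k⟫ + (γ / 2) * ‖pγ k - x k‖ ^ 2) :=
    ⟨_, fun _ => rfl⟩
  have hminγ k : IsMinOn (proxObjective (gradf F (x k)) (x k) γ) C (pγ k) :=
    isMinOn_iff.2 (hpγmin k)
  have hstep k : f (x (k + 1)) + D k ≤ f (x k) := by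
    have hmk : m k (x k) = f (x k) := by simp [hm, hf]
    linarith [hmaj k, hdec k, hD k]
  have hD0 k : 0 ≤ D k := by
    rw [hD]
    exact neg_nonneg.2 ((hminγ k).proxObjective_nonpos (hxC k))
  have hbudget : f (x 0) ≤ K * (ε ^ 2 / (8 * η)) := by
    rw [div_le_iff₀ (by positivity)] at hK
    rw [← mul_div_assoc, le_div_iff₀ (by positivity)]
    linarith
  obtain ⟨k, hkK, hDk⟩ :=
    exists_lt_le_of_add_le (a := fun k => f (x k)) hK0 hstep (by rw [hf]; positivity) hbudget
  have hS : f (x k) ≤ f (x 0) :=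
    antitone_nat_of_succ_le (f := fun k => f (x k)) (fun k => by linarith [hstep k, hD0 k])
      (Nat.zero_le k)
  exact ⟨k, hkK, inner_gradient_ge_of_neg_proxObjective_le
    (fun z => funext hf ▸ hasGradientAt_half_norm_sq (hF' z)) hCconvex
    (fun a b hab => hLfdef ▸ norm_gradf_sub_le_of_segment_subset hf hF' hJ hJLip hab)
    (hxC k) hS hη0 hγη (le_of_max_le_right hη) hε (hminγ k) (isMinOn_iff.2 (hpηmin k)) (hpηC k)
    ((hD k).symm.trans_le hDk)⟩

/-- Global O(ε⁻²) iteration complexity of the LM method for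
constrained problems.  For each k, `pγ k = P_γ(x_k)` is the projected-gradient
minimizer defining D_γ(x_k) = −(⟪∇f(x_k), pγ k − x_k⟫ + (γ/2)‖pγ k − x_k‖²),
and `pη k = P_η(x_k)`.  The conclusion asserts that some `pη k` with `k < K` is
an ε-stationary point of min_{x ∈ C} f(x). -/
theorem stmt_11 {d n : ℕ}
    (F : EuclideanSpace ℝ (Fin d) → EuclideanSpace ℝ (Fin n))
    (hF : ContDiff ℝ 1 F)
    (f : EuclideanSpace ℝ (Fin d) → ℝ)
    (hf : ∀ z, f z = (1 / 2) * ‖F z‖ ^ 2)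
    (C : Set (EuclideanSpace ℝ (Fin d)))
    (hCne : C.Nonempty) (hCclosed : IsClosed C) (hCconvex : Convex ℝ C)
    (x : ℕ → EuclideanSpace ℝ (Fin d)) (hxC : ∀ k, x k ∈ C)
    (σ L γ : ℝ) (hσ : 0 < σ) (hL : 0 < L) (hγ : 0 < γ)
    (hJ : ∀ z ∈ C ∩ {w | f w ≤ f (x 0)}, ‖fderiv ℝ F z‖ ≤ σ)
    (hJLip : ∀ z ∈ C, ∀ w ∈ C, segment ℝ z w ⊆ {v | f v ≤ f (x 0)} →
      ‖fderiv ℝ F w - fderiv ℝ F z‖ ≤ L * ‖w - z‖)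
    (Lf : ℝ) (hLfdef : Lf = σ ^ 2 + L * ‖F (x 0)‖)
    (lam : ℕ → ℝ) (hlam : ∀ k, 0 < lam k)
    (m : ℕ → EuclideanSpace ℝ (Fin d) → ℝ)
    (hm : ∀ k y, m k y =
      (1 / 2) * ‖F (x k) + fderiv ℝ F (x k) (y - x k)‖ ^ 2
      + (lam k / 2) * ‖y - x k‖ ^ 2)
    (pγ : ℕ → EuclideanSpace ℝ (Fin d)) (hpγC : ∀ k, pγ k ∈ C)
    (hpγmin : ∀ k, ∀ y ∈ C,
      ⟪gradf F (x k), pγ k - x k⟫ + (γ / 2) * ‖pγ k - x k‖ ^ 2 ≤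
      ⟪gradf F (x k), y - x k⟫ + (γ / 2) * ‖y - x k‖ ^ 2)
    (hmaj : ∀ k, f (x (k + 1)) ≤ m k (x (k + 1)))
    (hdec : ∀ k, m k (x (k + 1)) - m k (x k) ≤
      -(-(⟪gradf F (x k), pγ k - x k⟫ + (γ / 2) * ‖pγ k - x k‖ ^ 2)))
    (η : ℝ) (hη : max γ Lf ≤ η)
    (pη : ℕ → EuclideanSpace ℝ (Fin d)) (hpηC : ∀ k, pη k ∈ C)
    (hpηmin : ∀ k, ∀ y ∈ C,
      ⟪gradf F (x k), pη k - x k⟫ + (η / 2) * ‖pη k - x k‖ ^ 2 ≤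
      ⟪gradf F (x k), y - x k⟫ + (η / 2) * ‖y - x k‖ ^ 2)
    (ε : ℝ) (hε : 0 < ε)
    (K : ℕ) (hK0 : 0 < K) (hK : 8 * η * f (x 0) / ε ^ 2 ≤ K) :
    ∃ k < K, ∀ y ∈ C, ⟪gradf F (pη k), y - pη k⟫ ≥ -ε * ‖y - pη k‖ :=
  stmt_11_general F hF f hf C hCconvex x hxC σ L γ hγ hJ hJLip Lf hLfdef lam m hm pγ hpγmin hmaj
    hdec η hη pη hpηC hpηmin ε hε K hK0 hK
end
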